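/- arXiv:2307.04395 — 13 statements merged into one kernel-verified Lean document; each statement's English description precedes it below -/
import Mathlib

section
/- For every natural number j, the sum ∑_{p=0}^{j} p!·(j−p)! is at most 3·j!. -/
open Nat Finset

/-! Apart from the two end terms, which equal `j!`, each of the `j - 1` summands is at most
`(j - 1)!`, because `(a + 1)! (b + 1)! ≤ (a + b + 1)!`; so the inner terms add up to at most
`(j - 1) (j - 1)! ≤ j!`. -/

theorem succ_factorial_mul_succ_factorial_le (a b : ℕ) : (a + 1)! * (b + 1)! ≤ (a + b + 1)! := by
  induction a with
  | zero => simp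
  | succ a ih =>
    calc (a + 1 + 1)! * (b + 1)! = (a + 2) * ((a + 1)! * (b + 1)!) := by
          rw [factorial_succ (a + 1), mul_assoc]
      _ ≤ (a + b + 2) * (a + b + 1)! := by gcongr; omega
      _ = (a + 1 + b + 1)! := by rw [add_right_comm a 1 b, factorial_succ (a + b + 1)]

theorem factorial_mul_factorial_sub_le_factorial_pred {n p : ℕ} (hp : 0 < p) (hpn : p < n) :
    p ! * (n - p)! ≤ (n - 1)! := by
  obtain ⟨a, rfl⟩ := exists_add_one_eq.mpr hp
  obtain ⟨b, hb⟩ : ∃ b, b + 1 = n - (a + 1) := exists_add_one_eq.mpr (by omega)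
  rw [← hb, show n - 1 = a + b + 1 by omega]
  exact succ_factorial_mul_succ_factorial_le a b

/-- For every natural number `j`, `∑_{p=0}^{j} p! (j-p)! ≤ 3 j!`. -/
theorem stmt_0 (j : ℕ) :
    ∑ p ∈ Finset.range (j + 1), p.factorial * (j - p).factorial ≤ 3 * j.factorial := by
  obtain _ | m := j
  · simp
  have inner : ∑ i ∈ range m, (i + 1)! * (m + 1 - (i + 1))! ≤ (m + 1)! :=
    calc ∑ i ∈ range m, (i + 1)! * (m + 1 - (i + 1))! ≤ ∑ _i ∈ range m, m ! :=
          sum_le_sum fun i hi ↦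
            factorial_mul_factorial_sub_le_factorial_pred i.succ_pos (by simpa using hi)
      _ = m * m ! := by simp
      _ ≤ (m + 1)! := by rw [factorial_succ]; gcongr; omega
  rw [sum_range_succ, sum_range_succ']
  simp only [factorial_zero, Nat.sub_zero, Nat.sub_self, one_mul, mul_one]
  omega
end

section
/- Let R > 1 and C, D > 0 be real numbers. Let S = ∑_{j≥0} s_j b^j and T = ∑_{j≥0} t_j b^j be formal power series with complex coefficients such that |s_j| ≤ C·R^j·j! and |t_j| ≤ D·R^j·j! for all j. Then the coefficients u_j of the product S·T = ∑_{j≥0} u_j b^j (so u_j = ∑_{p=0}^{j} s_{j−p}·t_p) satisfy |u_j| ≤ 3·C·D·R^j·j! for all j. -/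
/-!
In the convolution `u_j = ∑_{p+q=j} s_p t_q` the Gevrey bounds give
`|u_j| ≤ C D R^j ∑_{p+q=j} p! q!`, so it suffices that `∑_{p+q=j} p! q! ≤ 3 j!`.
The two extreme terms contribute `2 j!`, and each of the `j - 1` interior terms is at most
`(j-1)!`, since `(p+1)! (q+1)! ≤ (p+q+1)!`.
-/

open Finset PowerSeries Nat

namespace Nat

theorem succ_factorial_mul_succ_factorial_le (a b : ℕ) :
    (a + 1)! * (b + 1)! ≤ (a + 1 + b)! := by
  calc (a + 1)! * (b + 1)! = (b + 1).choose b * (a + 1)! * b ! := by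
        rw [choose_succ_self_right, factorial_succ b]; ring
    _ ≤ (a + 1 + b).choose b * (a + 1)! * b ! := by
        gcongr ?_ * _ * _
        exact choose_le_choose b (by omega)
    _ = (a + 1 + b)! := add_choose_mul_factorial_mul_factorial _ _

theorem sum_antidiagonal_factorial_mul_factorial_le (j : ℕ) :
    ∑ p ∈ antidiagonal j, p.1 ! * p.2 ! ≤ 3 * j ! := by
  obtain _ | _ | n := j
  · simp
  · decide
  have interior : ∑ p ∈ antidiagonal n, (p.1 + 1)! * (p.2 + 1)! ≤ (n + 1) * (n + 1)! := by
    simpa using sum_le_card_nsmul (antidiagonal n) _ (n + 1)! fun p hp => by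
      rw [HasAntidiagonal.mem_antidiagonal] at hp
      simpa [← hp, add_right_comm] using succ_factorial_mul_succ_factorial_le p.1 p.2
  rw [Finset.Nat.sum_antidiagonal_succ, Finset.Nat.sum_antidiagonal_succ']
  have factorial_step : (n + 2)! = (n + 2) * (n + 1)! := factorial_succ _
  simp only [factorial_zero, one_mul, mul_one]
  nlinarith

end Nat

theorem PowerSeries.norm_coeff_mul_le {A : Type*} [SeminormedRing A] (n : ℕ)
    (S T : PowerSeries A) :
    ‖coeff n (S * T)‖ ≤ ∑ p ∈ antidiagonal n, ‖coeff p.1 S‖ * ‖coeff p.2 T‖ := by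
  rw [coeff_mul]
  exact (norm_sum_le _ _).trans (sum_le_sum fun p _ => norm_mul_le _ _)

theorem PowerSeries.norm_coeff_mul_le_of_factorial_bounds {A : Type*} [SeminormedRing A]
    (R C D : ℝ) (S T : PowerSeries A)
    (hS : ∀ j : ℕ, ‖coeff j S‖ ≤ C * R ^ j * j !)
    (hT : ∀ j : ℕ, ‖coeff j T‖ ≤ D * R ^ j * j !) (j : ℕ) :
    ‖coeff j (S * T)‖ ≤ 3 * C * D * R ^ j * j ! := by
  -- `C D R^j ≥ 0` is read off from the bounds on `s_0` and `t_j`, which majorize norms.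
  have hC : 0 ≤ C := by simpa using (norm_nonneg _).trans (hS 0)
  have hDR : 0 ≤ D * R ^ j :=
    nonneg_of_mul_nonneg_left ((norm_nonneg _).trans (hT j)) (by positivity)
  have termwise : ∀ p ∈ antidiagonal j, ‖coeff p.1 S‖ * ‖coeff p.2 T‖ ≤
      C * D * R ^ j * (p.1 ! * p.2 ! : ℕ) := by
    intro p hp
    rw [HasAntidiagonal.mem_antidiagonal] at hp
    calc ‖coeff p.1 S‖ * ‖coeff p.2 T‖
        ≤ (C * R ^ p.1 * p.1 !) * (D * R ^ p.2 * p.2 !) :=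
          mul_le_mul (hS _) (hT _) (norm_nonneg _) ((norm_nonneg _).trans (hS _))
      _ = C * D * R ^ j * (p.1 ! * p.2 ! : ℕ) := by
          rw [← hp, pow_add]; push_cast; ring
  have factorials : (∑ p ∈ antidiagonal j, (p.1 ! * p.2 ! : ℕ) : ℝ) ≤ 3 * j ! := by
    exact_mod_cast Nat.sum_antidiagonal_factorial_mul_factorial_le j
  calc ‖coeff j (S * T)‖
      ≤ ∑ p ∈ antidiagonal j, ‖coeff p.1 S‖ * ‖coeff p.2 T‖ := norm_coeff_mul_le j S T
    _ ≤ C * D * R ^ j * ∑ p ∈ antidiagonal j, ((p.1 ! * p.2 ! : ℕ) : ℝ) := by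
        rw [mul_sum]; exact sum_le_sum termwise
    _ ≤ C * D * R ^ j * (3 * j !) := by
        gcongr
        simpa [mul_assoc] using mul_nonneg hC hDR
    _ = 3 * C * D * R ^ j * j ! := by ring

theorem stmt_3_general (R C D : ℝ)
    (S T : PowerSeries ℂ)
    (hS : ∀ j : ℕ, ‖PowerSeries.coeff j S‖ ≤ C * R ^ j * j.factorial)
    (hT : ∀ j : ℕ, ‖PowerSeries.coeff j T‖ ≤ D * R ^ j * j.factorial) :
    ∀ j : ℕ, ‖PowerSeries.coeff j (S * T)‖ ≤ 3 * C * D * R ^ j * j.factorial :=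
  norm_coeff_mul_le_of_factorial_bounds R C D S T hS hT

/-- Gevrey-type bounds `|s_j| ≤ C R^j j!`, `|t_j| ≤ D R^j j!` on the coefficients of two
formal power series imply the bound `|u_j| ≤ 3 C D R^j j!` on the coefficients of their
product. -/
theorem stmt_3 (R C D : ℝ) (hR : 1 < R) (hC : 0 < C) (hD : 0 < D)
    (S T : PowerSeries ℂ)
    (hS : ∀ j : ℕ, ‖PowerSeries.coeff j S‖ ≤ C * R ^ j * j.factorial)
    (hT : ∀ j : ℕ, ‖PowerSeries.coeff j T‖ ≤ D * R ^ j * j.factorial) :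
    ∀ j : ℕ, ‖PowerSeries.coeff j (S * T)‖ ≤ 3 * C * D * R ^ j * j.factorial :=
  stmt_3_general R C D S T hS hT
end

section
/- Let R > 1 and C > 0 be real numbers and let S = ∑_{j≥0} s_j b^j be a formal power series with complex coefficients such that s_0 ≠ 0 and |s_j| ≤ C·R^j·j! for all j. Then the multiplicative inverse T = S^{-1} in the ring of formal power series (which exists since s_0 ≠ 0) also has coefficients of Gevrey type 1: there exist ρ > 1 and D > 0 such that the coefficients t_j of T satisfy |t_j| ≤ D·ρ^j·j! for all j. -/
/-!
Write `a = ‖s₀‖` and `t_j` for the coefficients of `S⁻¹`. The recursion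
`t_{n+1} = -s₀⁻¹ ∑_{i+j=n} s_{i+1} t_j` and the induction hypothesis `‖t_j‖ ≤ a⁻¹ ρ^j j!` give,
since `(i+1)! j! ≤ (n+1)!`,
`‖t_{n+1}‖ ≤ a⁻¹ (n+1)! ρ^{n+1} · a⁻¹ C ∑_{i ≥ 1} (R/ρ)^i ≤ a⁻¹ (n+1)! ρ^{n+1} · a⁻¹ C R / (ρ - R)`,
so the induction closes once `C R ≤ a (ρ - R)`, e.g. for `ρ = R + C R / a`.
-/

open PowerSeries Finset Nat

theorem Finset.Nat.sum_antidiagonal_pow_mul_pow_mul_sub {α : Type*} [CommRing α] (x y : α)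
    (n : ℕ) : (∑ p ∈ antidiagonal n, x ^ p.1 * y ^ p.2) * (x - y) = x ^ (n + 1) - y ^ (n + 1) := by
  rw [Finset.Nat.sum_antidiagonal_eq_sum_range_succ_mk]
  simpa using geom_sum₂_mul x y (n + 1)

theorem sub_mul_sum_antidiagonal_pow_mul_pow_le {α : Type*} [CommRing α] [LinearOrder α]
    [IsStrictOrderedRing α] {x y : α} (hx : 0 ≤ x) (n : ℕ) :
    (y - x) * ∑ p ∈ antidiagonal n, x ^ p.1 * y ^ p.2 ≤ y ^ (n + 1) := by
  have h := Finset.Nat.sum_antidiagonal_pow_mul_pow_mul_sub x y n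
  nlinarith [pow_nonneg hx (n + 1)]

theorem Nat.factorial_mul_factorial_le_factorial_add (i j : ℕ) : i ! * j ! ≤ (i + j)! :=
  Nat.le_of_dvd (factorial_pos _) (factorial_mul_factorial_dvd_factorial_add i j)

theorem PowerSeries.coeff_succ_inv {k : Type*} [Field k] (S : k⟦X⟧) (n : ℕ) :
    coeff (n + 1) S⁻¹ =
      -(constantCoeff S)⁻¹ * ∑ p ∈ antidiagonal n, coeff (p.1 + 1) S * coeff p.2 S⁻¹ := by
  rw [coeff_inv, if_neg n.succ_ne_zero, Finset.Nat.sum_antidiagonal_succ, if_neg (lt_irrefl _),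
    zero_add]
  refine congrArg _ (Finset.sum_congr rfl fun p hp => if_pos ?_)
  have := mem_antidiagonal.mp hp
  omega

theorem PowerSeries.norm_coeff_inv_le {k : Type*} [NormedField k] {S : k⟦X⟧} {C R ρ : ℝ}
    (hR : 0 ≤ R) (hRρ : R ≤ ρ) (hρ : C * R ≤ ‖constantCoeff S‖ * (ρ - R))
    (hS : ∀ j, ‖coeff (j + 1) S‖ ≤ C * R ^ (j + 1) * (j + 1)!) (n : ℕ) :
    ‖coeff n S⁻¹‖ ≤ ‖constantCoeff S‖⁻¹ * ρ ^ n * n ! := by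
  set a := ‖constantCoeff S‖
  have hCR : 0 ≤ C * R := by simpa using (norm_nonneg _).trans (hS 0)
  have hρ0 : 0 ≤ ρ := hR.trans hRρ
  induction n using Nat.strong_induction_on with
  | _ n ih =>
  rcases n with _ | n
  · simp [coeff_inv, a]
  have hterm : ∀ p ∈ antidiagonal n, ‖coeff (p.1 + 1) S‖ * ‖coeff p.2 S⁻¹‖ ≤
      a⁻¹ * (C * R) * (n + 1)! * (R ^ p.1 * ρ ^ p.2) := by
    intro p hp
    have hpn := mem_antidiagonal.mp hp
    have hfact : ((p.1 + 1)! * p.2 ! : ℝ) ≤ (n + 1)! := by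
      have := Nat.factorial_mul_factorial_le_factorial_add (p.1 + 1) p.2
      rw [add_right_comm, hpn] at this
      exact_mod_cast this
    calc ‖coeff (p.1 + 1) S‖ * ‖coeff p.2 S⁻¹‖
        ≤ (C * R ^ (p.1 + 1) * (p.1 + 1)!) * (a⁻¹ * ρ ^ p.2 * p.2 !) :=
          mul_le_mul (hS p.1) (ih p.2 (by omega)) (norm_nonneg _)
            ((norm_nonneg _).trans (hS p.1))
      _ = a⁻¹ * (C * R) * ((p.1 + 1)! * p.2 ! : ℝ) * (R ^ p.1 * ρ ^ p.2) := by ring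
      _ ≤ a⁻¹ * (C * R) * (n + 1)! * (R ^ p.1 * ρ ^ p.2) := by gcongr
  have hsum : 0 ≤ ∑ p ∈ antidiagonal n, R ^ p.1 * ρ ^ p.2 := by positivity
  have hCRρ : a⁻¹ * (C * R) ≤ ρ - R := inv_mul_le_of_le_mul₀ (norm_nonneg _) (by linarith) hρ
  calc ‖coeff (n + 1) S⁻¹‖
      ≤ a⁻¹ * ∑ p ∈ antidiagonal n, ‖coeff (p.1 + 1) S‖ * ‖coeff p.2 S⁻¹‖ := by
        rw [coeff_succ_inv, norm_mul, norm_neg, norm_inv]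
        exact mul_le_mul_of_nonneg_left
          (norm_sum_le_of_le _ fun p _ => (norm_mul _ _).le) (by positivity)
    _ ≤ a⁻¹ * ∑ p ∈ antidiagonal n, a⁻¹ * (C * R) * (n + 1)! * (R ^ p.1 * ρ ^ p.2) :=
        mul_le_mul_of_nonneg_left (sum_le_sum hterm) (by positivity)
    _ = a⁻¹ * ((n + 1)! * (a⁻¹ * (C * R) * ∑ p ∈ antidiagonal n, R ^ p.1 * ρ ^ p.2)) := by
        rw [← mul_sum]
        ring
    _ ≤ a⁻¹ * ((n + 1)! * ((ρ - R) * ∑ p ∈ antidiagonal n, R ^ p.1 * ρ ^ p.2)) := by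
        gcongr
    _ ≤ a⁻¹ * ((n + 1)! * ρ ^ (n + 1)) := by
        gcongr
        exact sub_mul_sum_antidiagonal_pow_mul_pow_le hR n
    _ = a⁻¹ * ρ ^ (n + 1) * (n + 1)! := by ring

/-- If `S` has nonzero constant term and coefficients of Gevrey type 1, i.e.
`|s_j| ≤ C R^j j!`, then its multiplicative inverse in `ℂ[[b]]` also has coefficients of
Gevrey type 1. -/
theorem stmt_5 (R C : ℝ) (hR : 1 < R) (hC : 0 < C)
    (S : PowerSeries ℂ) (h0 : PowerSeries.coeff 0 S ≠ 0)
    (hS : ∀ j : ℕ, ‖PowerSeries.coeff j S‖ ≤ C * R ^ j * j.factorial) :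
    ∃ ρ : ℝ, 1 < ρ ∧ ∃ D : ℝ, 0 < D ∧ ∀ j : ℕ,
      ‖PowerSeries.coeff j S⁻¹‖ ≤ D * ρ ^ j * j.factorial := by
  rw [coeff_zero_eq_constantCoeff_apply] at h0
  have ha : 0 < ‖constantCoeff S‖ := norm_pos_iff.mpr h0
  have hCR : 0 ≤ C * R / ‖constantCoeff S‖ := by positivity
  refine ⟨R + C * R / ‖constantCoeff S‖, by linarith, ‖constantCoeff S‖⁻¹, inv_pos.mpr ha,
    norm_coeff_inv_le (by linarith) (by linarith) ?_ fun j => hS (j + 1)⟩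
  rw [add_sub_cancel_left, mul_div_cancel₀ _ ha.ne']
end

section
/- Let R be a (unital, associative, not necessarily commutative) ring and let a, b ∈ R satisfy a·b − b·a = b². Then for all natural numbers p and all q ≥ 1, one has a^p·b^q = ∑_{j=0}^{p} Γ_{p,q}^j · b^{q+j}·a^{p−j}, where Γ_{p,q}^j is the natural number C(q+j−1, j)·p!/(p−j)! (binomial coefficient times falling factorial), acting via the natural-number scalar multiplication of R. -/
/-!
Moving `a` past `b ^ m` gives `a b^m = b^m a + m b^(m+1)`, so left multiplication by `a` sends
`b^n a^k` to `b^n a^(k+1) + n b^(n+1) a^k`. By induction on `p` the formula then reduces to the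
Pascal-type recurrence `Γ_{p+1,q}^{j+1} = Γ_{p,q}^{j+1} + (q+j) Γ_{p,q}^j`, which follows from
`p + 1 = (p - j) + (j + 1)` and `(j+1) C(q+j, j+1) = (q+j) C(q+j-1, j)`.
-/

open Finset

def gammaCoeff (p q j : ℕ) : ℕ := (q + j - 1).choose j * p.descFactorial j

lemma gammaCoeff_succ_zero (p q : ℕ) : gammaCoeff (p + 1) q 0 = gammaCoeff p q 0 := by
  simp [gammaCoeff]

lemma gammaCoeff_of_lt {p j : ℕ} (q : ℕ) (hpj : p < j) : gammaCoeff p q j = 0 := by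
  simp [gammaCoeff, Nat.descFactorial_eq_zero_iff_lt.mpr hpj]

lemma add_mul_choose_sub_one (q j : ℕ) :
    (q + j) * (q + j - 1).choose j = (j + 1) * (q + j).choose (j + 1) := by
  rcases Nat.eq_zero_or_pos (q + j) with h | h
  · simp [h]
  · have := Nat.add_one_mul_choose_eq (q + j - 1) j
    rw [Nat.sub_add_cancel h] at this
    rw [this, mul_comm]

lemma gammaCoeff_succ_succ (p q j : ℕ) :
    gammaCoeff (p + 1) q (j + 1) = gammaCoeff p q (j + 1) + gammaCoeff p q j * (q + j) := by
  rcases lt_or_ge p j with hpj | hjp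
  · simp [gammaCoeff, Nat.descFactorial_eq_zero_iff_lt.mpr hpj]
    omega
  · have hp : p + 1 = (p - j) + (j + 1) := by omega
    have hq : q + (j + 1) - 1 = q + j := by omega
    simp only [gammaCoeff, hq, Nat.succ_descFactorial_succ, Nat.descFactorial_succ]
    rw [hp]
    linear_combination p.descFactorial j * (add_mul_choose_sub_one q j).symm

-- `F n k` stands for `b ^ n * a ^ k`.
lemma sum_range_gammaCoeff_succ {M : Type*} [AddCommMonoid M] (F : ℕ → ℕ → M) (p q : ℕ) :
    ∑ j ∈ range (p + 2), gammaCoeff (p + 1) q j • F (q + j) (p + 1 - j)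
      = ∑ j ∈ range (p + 1), (gammaCoeff p q j • F (q + j) (p - j + 1)
          + (gammaCoeff p q j * (q + j)) • F (q + j + 1) (p - j)) := by
  have hshift : ∑ j ∈ range (p + 2), gammaCoeff p q j • F (q + j) (p + 1 - j)
      = ∑ j ∈ range (p + 1), gammaCoeff p q j • F (q + j) (p - j + 1) := by
    rw [sum_range_succ, gammaCoeff_of_lt q p.lt_succ_self, zero_smul, add_zero]
    refine sum_congr rfl fun j hj => ?_
    rw [Nat.sub_add_comm (Nat.le_of_lt_succ (mem_range.mp hj))]
  rw [sum_add_distrib, ← hshift, sum_range_succ' _ (p + 1), sum_range_succ' _ (p + 1)]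
  simp only [gammaCoeff_succ_succ, gammaCoeff_succ_zero, add_smul, sum_add_distrib,
    Nat.add_sub_add_right, ← add_assoc]
  abel

section

variable {R : Type*} [Ring R] {a b : R}

lemma mul_pow_of_sub_eq_sq (h : a * b - b * a = b ^ 2) (m : ℕ) :
    a * b ^ m = b ^ m * a + m • b ^ (m + 1) := by
  have hab : a * b = b * a + b ^ 2 := eq_add_of_sub_eq' h
  induction m with
  | zero => simp
  | succ m ih =>
    calc a * b ^ (m + 1) = (a * b ^ m) * b := by rw [pow_succ, mul_assoc]
      _ = b ^ m * (a * b) + m • b ^ (m + 2) := by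
        rw [ih, add_mul, mul_assoc, smul_mul_assoc, ← pow_succ]
      _ = b ^ (m + 1) * a + (m + 1) • b ^ (m + 2) := by
        rw [hab, mul_add, ← mul_assoc, ← pow_succ, ← pow_add, succ_nsmul]; abel

lemma mul_pow_mul_pow_of_sub_eq_sq (h : a * b - b * a = b ^ 2) (n k : ℕ) :
    a * (b ^ n * a ^ k) = b ^ n * a ^ (k + 1) + n • (b ^ (n + 1) * a ^ k) := by
  rw [← mul_assoc, mul_pow_of_sub_eq_sq h, add_mul, mul_assoc, ← pow_succ', smul_mul_assoc]

lemma pow_mul_pow_eq_sum_gammaCoeff (h : a * b - b * a = b ^ 2) (p q : ℕ) :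
    a ^ p * b ^ q = ∑ j ∈ range (p + 1), gammaCoeff p q j • (b ^ (q + j) * a ^ (p - j)) := by
  induction p with
  | zero => simp [gammaCoeff]
  | succ p ih =>
    rw [pow_succ', mul_assoc, ih, mul_sum, sum_range_gammaCoeff_succ (fun n k => b ^ n * a ^ k)]
    refine sum_congr rfl fun j _ => ?_
    rw [mul_smul_comm, mul_pow_mul_pow_of_sub_eq_sq h, smul_add, smul_smul]

end

theorem stmt_7_general {R : Type*} [Ring R] (a b : R) (h : a * b - b * a = b ^ 2)
    (p q : ℕ) :
    a ^ p * b ^ q = ∑ j ∈ Finset.range (p + 1),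
      (((q + j - 1).choose j) * p.descFactorial j) • (b ^ (q + j) * a ^ (p - j)) :=
  pow_mul_pow_eq_sum_gammaCoeff h p q

/-- In a ring with `ab - ba = b²`, for `p ≥ 0` and `q ≥ 1`:
`a^p b^q = ∑_{j=0}^{p} Γ_{p,q}^j b^{q+j} a^{p-j}` with
`Γ_{p,q}^j = C(q+j-1, j) · p!/(p-j)!`. -/
theorem stmt_7 {R : Type*} [Ring R] (a b : R) (h : a * b - b * a = b ^ 2)
    (p q : ℕ) (hq : 1 ≤ q) :
    a ^ p * b ^ q = ∑ j ∈ Finset.range (p + 1),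
      (((q + j - 1).choose j) * p.descFactorial j) • (b ^ (q + j) * a ^ (p - j)) :=
  stmt_7_general a b h p q
end

section
/- Let R be a (unital, associative, not necessarily commutative) ring and let a, b ∈ R satisfy a·b − b·a = b². Then for all natural numbers p and all q ≥ 1, one has b^q·a^p = ∑_{j=0}^{p} (−1)^j·Γ_{p,q}^j · a^{p−j}·b^{q+j}, where Γ_{p,q}^j is the natural number C(q+j−1, j)·p!/(p−j)!. -/
/-!
Right multiplication by `a` splits as `L_a + ad(-a)` with `L_a` left multiplication, and the two
commute, so the binomial theorem gives `f a^p = ∑ C(p,j) a^(p-j) ad(-a)^j f`. The relation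
`[a, b] = b²` makes `ad(-a)` act on powers of `b` like `-b² d/db`, hence
`ad(-a)^j b^q = (-1)^j q(q+1)⋯(q+j-1) b^(q+j)`, and `C(p,j) q(q+1)⋯(q+j-1) = C(q+j-1,j) p!/(p-j)!`.
-/
open Finset LieAlgebra

attribute [local instance] LieRing.ofAssociativeRing

theorem mul_pow_eq_sum_choose_smul_ad_neg_pow {R : Type*} [Ring R] (f a : R) (p : ℕ) :
    f * a ^ p = ∑ j ∈ range (p + 1), p.choose j • (a ^ (p - j) * (ad ℤ R (-a) ^ j) f) := by
  set L := LinearMap.mulLeft ℤ a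
  have had : ad ℤ R (-a) = LinearMap.mulRight ℤ a - L := by
    ext x
    simp only [ad_apply, Ring.lie_def, LinearMap.sub_apply, LinearMap.mulRight_apply,
      LinearMap.mulLeft_apply, L]
    noncomm_ring
  have hcomm : Commute (ad ℤ R (-a)) L := by
    rw [had]; exact (LinearMap.commute_mulLeft_right a a).symm.sub_left (Commute.refl L)
  calc f * a ^ p = (LinearMap.mulRight ℤ a ^ p) f := by simp [LinearMap.pow_mulRight]
    _ = ∑ j ∈ range (p + 1),
          (ad ℤ R (-a) ^ j * L ^ (p - j) * (p.choose j : Module.End ℤ R)) f := by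
      rw [← LinearMap.sum_apply, ← hcomm.add_pow, had, sub_add_cancel]
    _ = _ := by
      refine sum_congr rfl fun j _ => ?_
      rw [(hcomm.pow_pow j (p - j)).eq, Module.End.mul_apply, Module.End.mul_apply,
        Module.End.natCast_apply, map_nsmul, map_nsmul, LinearMap.pow_mulLeft,
        LinearMap.mulLeft_apply]

theorem Nat.choose_mul_ascFactorial (p q j : ℕ) :
    p.choose j * q.ascFactorial j = (q + j - 1).choose j * p.descFactorial j := by
  rw [Nat.ascFactorial_eq_factorial_mul_choose', Nat.descFactorial_eq_factorial_mul_choose]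
  ring

section
variable {R : Type*} [Ring R] {a b : R}

theorem lie_pow_of_lie_eq_sq (h : a * b - b * a = b ^ 2) (q : ℕ) :
    ⁅a, b ^ q⁆ = q • b ^ (q + 1) := by
  induction q with
  | zero => simp [Ring.lie_def]
  | succ q ih =>
    calc ⁅a, b ^ (q + 1)⁆ = ⁅a, b ^ q⁆ * b + b ^ q * (a * b - b * a) := by
          simp only [Ring.lie_def, pow_succ]; noncomm_ring
      _ = (q + 1) • b ^ (q + 2) := by
          rw [ih, h, smul_mul_assoc, ← pow_succ, ← pow_add, succ_nsmul]

theorem ad_neg_pow_apply_pow_of_lie_eq_sq (h : a * b - b * a = b ^ 2) (q j : ℕ) :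
    (ad ℤ R (-a) ^ j) (b ^ q) = ((-1) ^ j * q.ascFactorial j : ℤ) • b ^ (q + j) := by
  induction j with
  | zero => simp
  | succ j ih =>
    rw [pow_succ', Module.End.mul_apply, ih, map_zsmul, ad_apply, neg_lie,
      lie_pow_of_lie_eq_sq h, Nat.ascFactorial_succ, smul_neg, ← natCast_zsmul, smul_smul,
      ← neg_smul, add_assoc]
    congr 1
    push_cast
    ring

end

theorem stmt_8_general {R : Type*} [Ring R] (a b : R) (h : a * b - b * a = b ^ 2)
    (p q : ℕ) :
    b ^ q * a ^ p = ∑ j ∈ Finset.range (p + 1),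
      ((-1) ^ j * (((q + j - 1).choose j) * p.descFactorial j : ℤ)) •
        (a ^ (p - j) * b ^ (q + j)) := by
  rw [mul_pow_eq_sum_choose_smul_ad_neg_pow]
  refine sum_congr rfl fun j _ => ?_
  rw [ad_neg_pow_apply_pow_of_lie_eq_sq h, mul_smul_comm, ← natCast_zsmul, smul_smul]
  congr 1
  rw [mul_left_comm, ← Nat.cast_mul, Nat.choose_mul_ascFactorial, Nat.cast_mul]

/-- In a ring with `ab - ba = b²`, for `p ≥ 0` and `q ≥ 1`:
`b^q a^p = ∑_{j=0}^{p} (-1)^j Γ_{p,q}^j a^{p-j} b^{q+j}` with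
`Γ_{p,q}^j = C(q+j-1, j) · p!/(p-j)!`. -/
theorem stmt_8 {R : Type*} [Ring R] (a b : R) (h : a * b - b * a = b ^ 2)
    (p q : ℕ) (hq : 1 ≤ q) :
    b ^ q * a ^ p = ∑ j ∈ Finset.range (p + 1),
      ((-1) ^ j * (((q + j - 1).choose j) * p.descFactorial j : ℤ)) •
        (a ^ (p - j) * b ^ (q + j)) :=
  stmt_8_general a b h p q
end

section
/- Let A be an associative unital algebra over ℂ and let a, b ∈ A satisfy a·b − b·a = b². Then for every complex number x and every natural number p, one has (a + x·b)^p = a^p + ∑_{j=1}^{p} γ_j(x)·C(p,j) · b^j·a^{p−j}, where γ_j(x) := x·(x+1)·⋯·(x+j−1) ∈ ℂ and C(p,j) is the binomial coefficient; here the complex coefficient acts by scalar multiplication. -/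
/-!
From `a b = b a + b²` one gets `a bʲ = bʲ a + j bʲ⁺¹`, so left multiplication by `a + x b` sends
`bⁱ aᵏ` to `bⁱ aᵏ⁺¹ + (x + i) bⁱ⁺¹ aᵏ`. Expanding `(a + x b)ᵖ` by induction on `p`, the coefficient
of `bⁱ aᵏ` (with `i + k = p`) then obeys Pascal's rule twisted by the factor `x + i`, which is exactly
the recursion satisfied by `γᵢ(x) C(p, i)` because `γᵢ₊₁(x) = γᵢ(x) (x + i)`.
-/

open Finset

section

variable {R A : Type*} [CommSemiring R] [Semiring A] [Algebra R A] {a b : A}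

theorem mul_pow_eq_of_mul_eq_add_sq (h : a * b = b * a + b ^ 2) (j : ℕ) :
    a * b ^ j = b ^ j * a + j • b ^ (j + 1) := by
  induction j with
  | zero => simp
  | succ j ih =>
    calc a * b ^ (j + 1) = (a * b ^ j) * b := by rw [pow_succ, mul_assoc]
      _ = b ^ j * (a * b) + j • b ^ (j + 2) := by
        rw [ih, add_mul, mul_assoc, smul_mul_assoc, ← pow_succ]
      _ = b ^ (j + 1) * a + (j + 1) • b ^ (j + 2) := by
        rw [h, mul_add, ← mul_assoc, ← pow_succ, ← pow_add, succ_nsmul]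
        abel

theorem add_smul_mul_pow_mul_pow (h : a * b = b * a + b ^ 2) (x : R) (i k : ℕ) :
    (a + x • b) * (b ^ i * a ^ k) = b ^ i * a ^ (k + 1) + (x + i) • (b ^ (i + 1) * a ^ k) := by
  rw [add_mul, ← mul_assoc, mul_pow_eq_of_mul_eq_add_sq h, smul_mul_assoc, ← mul_assoc, ← pow_succ',
    add_mul, mul_assoc, ← pow_succ', add_smul, ← Nat.cast_smul_eq_nsmul R, smul_mul_assoc]
  abel

-- Both sides are the sum of `g` over `antidiagonal (q + 1)`, peeled off at opposite ends.
theorem sum_antidiagonal_shift {M : Type*} [AddCommMonoid M] {g : ℕ → ℕ → M} {q : ℕ}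
    (hg : g (q + 1) 0 = 0) :
    ∑ ik ∈ antidiagonal q, g ik.1 (ik.2 + 1) =
      g 0 (q + 1) + ∑ ik ∈ antidiagonal q, g (ik.1 + 1) ik.2 := by
  have h₁ := Nat.sum_antidiagonal_succ (f := fun ik : ℕ × ℕ => g ik.1 ik.2) (n := q)
  have h₂ := Nat.sum_antidiagonal_succ' (f := fun ik : ℕ × ℕ => g ik.1 ik.2) (n := q)
  simp only [hg, zero_add] at h₁ h₂
  rw [← h₂, h₁]

theorem add_smul_pow_eq_sum_antidiagonal (h : a * b = b * a + b ^ 2) (x : R) (q : ℕ) :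
    (a + x • b) ^ q = ∑ ik ∈ antidiagonal q,
      ((∏ l ∈ range ik.1, (x + l)) * q.choose ik.1) • (b ^ ik.1 * a ^ ik.2) := by
  induction q with
  | zero => simp
  | succ q ih =>
    rw [pow_succ', ih, mul_sum, Nat.sum_antidiagonal_succ]
    simp only [add_smul_mul_pow_mul_pow h, mul_smul_comm, smul_add, smul_smul, sum_add_distrib]
    rw [sum_antidiagonal_shift
      (g := fun i k => ((∏ l ∈ range i, (x + l)) * q.choose i) • (b ^ i * a ^ k)) (by simp),
      add_assoc, ← sum_add_distrib]
    congr 1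
    · simp
    refine sum_congr rfl fun ik _ => ?_
    rw [← add_smul, prod_range_succ, Nat.choose_succ_succ']
    push_cast
    congr 1
    ring

end

/-- In a unital associative `ℂ`-algebra with `ab - ba = b²`, for every `x : ℂ` and `p : ℕ`:
`(a + x b)^p = a^p + ∑_{j=1}^{p} γ_j(x) C(p,j) b^j a^{p-j}` where
`γ_j(x) = x(x+1)⋯(x+j-1)`. -/
theorem stmt_9 {A : Type*} [Ring A] [Algebra ℂ A] (a b : A)
    (h : a * b - b * a = b ^ 2) (x : ℂ) (p : ℕ) :
    (a + x • b) ^ p = a ^ p + ∑ j ∈ Finset.Icc 1 p,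
      ((∏ i ∈ Finset.range j, (x + i)) * (p.choose j : ℂ)) • (b ^ j * a ^ (p - j)) := by
  rw [add_smul_pow_eq_sum_antidiagonal (sub_eq_iff_eq_add'.mp h),
    Nat.sum_antidiagonal_eq_sum_range_succ_mk, Nat.range_succ_eq_Icc_zero,
    Icc_eq_cons_Ioc p.zero_le, sum_cons, ← Icc_add_one_left_eq_Ioc]
  simp
end

section
/- Let R be a (unital, associative, not necessarily commutative) ring and let a, b ∈ R satisfy a·b − b·a = b². Then for all natural numbers p and q, one has b^q·(a + q·b)^p = a^p·b^q, where q·b denotes the q-fold natural-number multiple of b. -/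
lemma aux_comm {R : Type*} [Ring R] (a b : R) (h : a * b - b * a = b ^ 2) (q : ℕ) :
    b * (a + (q + 1) • b) = (a + q • b) * b := by
  have hb : a * b = b * a + b ^ 2 := by rw [← h]; abel
  simp only [add_mul, mul_add, succ_nsmul, hb]
  simp only [smul_mul_assoc, mul_smul_comm, pow_two]
  abel

lemma aux_pow {R : Type*} [Ring R] (a b : R) (h : a * b - b * a = b ^ 2) (q p : ℕ) :
    b * (a + (q + 1) • b) ^ p = (a + q • b) ^ p * b := by
  induction p with
  | zero => simp
  | succ p ih =>
    rw [pow_succ', ← mul_assoc, aux_comm a b h q, mul_assoc, ih, ← mul_assoc, ← pow_succ']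

/-- In a ring with `ab - ba = b²`, one has `b^q (a + q b)^p = a^p b^q`. -/
theorem stmt_10 {R : Type*} [Ring R] (a b : R) (h : a * b - b * a = b ^ 2) (p q : ℕ) :
    b ^ q * (a + q • b) ^ p = a ^ p * b ^ q := by
  induction q with
  | zero => simp
  | succ q ih =>
    rw [pow_succ, mul_assoc, aux_pow a b h q p, ← mul_assoc, ih, mul_assoc]
end

section
/- Let R be a (unital, associative, not necessarily commutative) ring and let a, b ∈ R satisfy a·b − b·a = b². Then for every natural number p ≥ 1, one has (a − b)^p = a^p − p·(b·a^{p−1}), where p·(b·a^{p−1}) denotes the p-fold additive multiple. -/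
theorem aux {R : Type*} [Ring R] (a b : R) (h : a * b - b * a = b ^ 2)
    (m : ℕ) : (a - b) ^ (m + 1) = a ^ (m + 1) - (m + 1) • (b * a ^ m) := by
  induction m with
  | zero => simp
  | succ n ih =>
    have hab : a * b = b ^ 2 + b * a := by rw [← h]; abel
    have key : a * (b * a ^ n) = b * a ^ (n + 1) + b ^ 2 * a ^ n := by
      rw [← mul_assoc, hab, add_mul, mul_assoc, ← pow_succ']; exact add_comm _ _
    calc (a - b) ^ (n + 2) = (a - b) * (a - b) ^ (n + 1) := by rw [pow_succ']
    _ = (a - b) * (a ^ (n + 1) - (n + 1) • (b * a ^ n)) := by rw [ih]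
    _ = a ^ (n + 2) - (n + 1) • (a * (b * a ^ n)) - b * a ^ (n + 1)
        + (n + 1) • (b * (b * a ^ n)) := by
      rw [mul_sub, sub_mul, sub_mul, mul_smul_comm, mul_smul_comm, ← pow_succ']
      simp only [pow_succ', mul_assoc]
      abel
    _ = a ^ (n + 2) - (n + 2) • (b * a ^ (n + 1)) := by
      rw [key, smul_add]
      have hb : b * (b * a ^ n) = b ^ 2 * a ^ n := by rw [← mul_assoc, ← pow_two]
      rw [hb]
      simp only [succ_nsmul, smul_add]
      abel

/-- In a ring with `ab - ba = b²`, for `p ≥ 1`: `(a - b)^p = a^p - p · (b a^{p-1})`. -/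
theorem stmt_11 {R : Type*} [Ring R] (a b : R) (h : a * b - b * a = b ^ 2)
    (p : ℕ) (hp : 1 ≤ p) :
    (a - b) ^ p = a ^ p - p • (b * a ^ (p - 1)) := by
  obtain ⟨m, rfl⟩ := Nat.exists_eq_add_of_le hp
  simpa [add_comm] using aux a b h m
end

section
/- Let A be an associative unital algebra over ℂ and let a, b ∈ A satisfy a·b − b·a = b². Then for every complex number λ and every integer m ≥ 1 one has the division identity a^m = Q_{m−1}(λ)·(a − λ·b) + λ(λ+1)⋯(λ+m−1) · b^m, where Q_{m−1}(λ) := ∑_{i=0}^{m−1} (λ(λ+1)⋯(λ+i−1)) · a^{m−1−i}·b^i (the i = 0 term being a^{m−1}, with empty product equal to 1). -/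
/-!
From `a b - b a = b²` one gets `a bⁱ = bⁱ a + i bⁱ⁺¹`. Writing `a = (a - λ b) + λ b` on the right of
`bᵐ a` therefore gives `a bᵐ = bᵐ (a - λ b) + (λ + m) bᵐ⁺¹`, and multiplying the identity for `aᵐ`
on the left by `a` produces the identity for `aᵐ⁺¹`: the rising factorial gains the factor `λ + m`.
-/

open Finset

theorem mul_pow_eq_pow_mul_add_nsmul {A : Type*} [Ring A] {a b : A} (h : a * b - b * a = b ^ 2)
    (n : ℕ) : a * b ^ n = b ^ n * a + n • b ^ (n + 1) := by
  have hab : a * b = b * a + b ^ 2 := by rw [← h]; abel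
  induction n with
  | zero => simp
  | succ n ih =>
    calc a * b ^ (n + 1)
      _ = (b ^ n * a + n • b ^ (n + 1)) * b := by rw [← ih, mul_assoc, ← pow_succ]
      _ = b ^ n * (b * a + b ^ 2) + n • b ^ (n + 2) := by
        rw [add_mul, mul_assoc, ← hab, smul_mul_assoc, ← pow_succ]
      _ = b ^ (n + 1) * a + (n + 1) • b ^ (n + 1 + 1) := by
        rw [mul_add, ← mul_assoc, ← pow_succ, ← pow_add, add_smul, one_smul]; abel

theorem sum_range_succ_smul_pow_mul_pow {R A : Type*} [CommSemiring R] [Semiring A] [Algebra R A]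
    (f : ℕ → R) (a b : A) (m : ℕ) :
    ∑ i ∈ range (m + 1), f i • (a ^ (m + 1 - 1 - i) * b ^ i) =
      a * ∑ i ∈ range m, f i • (a ^ (m - 1 - i) * b ^ i) + f m • b ^ m := by
  rw [sum_range_succ, mul_sum, Nat.add_sub_cancel, Nat.sub_self, pow_zero, one_mul]
  congr 1
  refine sum_congr rfl fun i hi => ?_
  rw [Algebra.mul_smul_comm, ← mul_assoc, ← pow_succ']
  congr 3
  have := mem_range.mp hi
  omega

theorem pow_eq_sum_mul_sub_smul_add_prod_smul_pow {R A : Type*} [CommRing R] [Ring A]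
    [Algebra R A] {a b : A} (h : a * b - b * a = b ^ 2) (lam : R) (m : ℕ) :
    a ^ m =
      (∑ i ∈ range m, (∏ u ∈ range i, (lam + u)) • (a ^ (m - 1 - i) * b ^ i)) * (a - lam • b)
        + (∏ u ∈ range m, (lam + u)) • b ^ m := by
  induction m with
  | zero => simp
  | succ m ih =>
    have hbm : a * b ^ m = b ^ m * (a - lam • b) + (lam + m) • b ^ (m + 1) := by
      rw [mul_pow_eq_pow_mul_add_nsmul h, mul_sub, Algebra.mul_smul_comm, ← pow_succ, add_smul,
        Nat.cast_smul_eq_nsmul]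
      abel
    rw [sum_range_succ_smul_pow_mul_pow, prod_range_succ, pow_succ', ih, mul_add, ← mul_assoc,
      Algebra.mul_smul_comm, hbm, add_mul, smul_add, smul_mul_assoc, mul_smul]
    abel

theorem stmt_12_general {A : Type*} [Ring A] [Algebra ℂ A] (a b : A)
    (h : a * b - b * a = b ^ 2) (lam : ℂ) (m : ℕ) :
    a ^ m =
      (∑ i ∈ Finset.range m,
          (∏ u ∈ Finset.range i, (lam + u)) • (a ^ (m - 1 - i) * b ^ i)) * (a - lam • b)
        + (∏ u ∈ Finset.range m, (lam + u)) • b ^ m :=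
  pow_eq_sum_mul_sub_smul_add_prod_smul_pow h lam m

/-- Division identity: in a unital associative `ℂ`-algebra with `ab - ba = b²`, for every
`λ : ℂ` and `m ≥ 1`:
`a^m = Q_{m-1}(λ)(a - λ b) + λ(λ+1)⋯(λ+m-1) b^m` where
`Q_{m-1}(λ) = ∑_{i=0}^{m-1} λ(λ+1)⋯(λ+i-1) a^{m-1-i} b^i`. -/
theorem stmt_12 {A : Type*} [Ring A] [Algebra ℂ A] (a b : A)
    (h : a * b - b * a = b ^ 2) (lam : ℂ) (m : ℕ) (hm : 1 ≤ m) :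
    a ^ m =
      (∑ i ∈ Finset.range m,
          (∏ u ∈ Finset.range i, (lam + u)) • (a ^ (m - 1 - i) * b ^ i)) * (a - lam • b)
        + (∏ u ∈ Finset.range m, (lam + u)) • b ^ m :=
  stmt_12_general a b h lam m
end

section
/- Let A be a complex Banach algebra (a complete normed unital ring which is a normed algebra over ℂ) and let u, x ∈ A satisfy u·x − x·u = x. Then exp(2πi·u)·x = x·exp(2πi·u), where exp denotes the analytic exponential given by the everywhere-convergent series exp(y) = ∑_{n≥0} yⁿ/n! and i is the imaginary unit. -/
/-!
The relation says `x * (u + 1) = u * x`, so `x` intertwines `2πi (u + 1)` with `2πi u`, hence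
also their exponentials. Since `1` is central, `exp (2πi (u + 1)) = exp (2πi u) * e^{2πi}`, and
`e^{2πi} = 1`.
-/

open NormedSpace

theorem semiconjBy_add_one_of_mul_sub_mul_eq_self {R : Type*} [Ring R] {u x : R}
    (h : u * x - x * u = x) : SemiconjBy x (u + 1) u := by
  rw [SemiconjBy, mul_add, mul_one]
  exact (sub_eq_iff_eq_add'.mp h).symm

theorem NormedSpace.exp_add_algebraMap {𝕂 𝔸 : Type*} [RCLike 𝕂] [NormedRing 𝔸]
    [NormedAlgebra 𝕂 𝔸] [CompleteSpace 𝔸] (a : 𝔸) (t : 𝕂) :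
    exp (a + algebraMap 𝕂 𝔸 t) = exp a * algebraMap 𝕂 𝔸 (exp t) := by
  let _ : NormedAlgebra ℚ 𝔸 := NormedAlgebra.restrictScalars ℚ 𝕂 𝔸
  rw [exp_add_of_commute (Algebra.commutes t a).symm, algebraMap_exp_comm]

/-- In a complex Banach algebra, if `ux - xu = x` then `exp(2πi u)` commutes with `x`. -/
theorem stmt_14 {A : Type*} [NormedRing A] [NormedAlgebra ℂ A] [CompleteSpace A]
    (u x : A) (h : u * x - x * u = x) :
    NormedSpace.exp (((2 * Real.pi : ℂ) * Complex.I) • u) * x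
      = x * NormedSpace.exp (((2 * Real.pi : ℂ) * Complex.I) • u) := by
  let _ : NormedAlgebra ℚ A := NormedAlgebra.restrictScalars ℚ ℂ A
  set c : ℂ := (2 * Real.pi : ℂ) * Complex.I
  have hsemi : SemiconjBy x (c • u + algebraMap ℂ A c) (c • u) := by
    simpa [smul_add, Algebra.algebraMap_eq_smul_one] using
      (semiconjBy_add_one_of_mul_sub_mul_eq_self h).smul_right c
  have hexp : exp (c • u + algebraMap ℂ A c) = exp (c • u) := by
    rw [exp_add_algebraMap, ← Complex.exp_eq_exp_ℂ, Complex.exp_two_pi_mul_I, map_one, mul_one]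
  exact (hexp ▸ hsemi.exp_right).symm
end

section
/- Let k, l be positive natural numbers, let F be an l×l complex matrix and G a k×k complex matrix such that F and G have no common eigenvalue, i.e. the spectrum of F and the spectrum of G (as elements of the corresponding matrix algebras over ℂ) are disjoint. Then the linear endomorphism of the space of k×l complex matrices given by Z ↦ Z·F − G·Z is bijective. -/
/-!
If `Z F = G Z`, then `Z p(F) = p(G) Z` for every polynomial `p`; taking `p = χ_F`, Cayley–Hamilton
gives `χ_F(G) Z = 0`. Over an algebraically closed field `χ_F(G) = ∏ (G - λ)` over the eigenvalues
`λ` of `F`, which is invertible when `F` and `G` share no eigenvalue, so `Z = 0`. Hence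
`Z ↦ Z F - G Z` is injective, and therefore bijective by finite-dimensionality.
-/

open Polynomial

namespace Matrix

variable {m n R : Type*} [Fintype m] [Fintype n] [DecidableEq m] [DecidableEq n]

section CommRing

variable [CommRing R]

def sylvesterMap (F : Matrix n n R) (G : Matrix m m R) : Matrix m n R →ₗ[R] Matrix m n R where
  toFun Z := Z * F - G * Z
  map_add' X Y := by rw [Matrix.add_mul, Matrix.mul_add]; abel
  map_smul' c X := by simp only [Matrix.smul_mul, Matrix.mul_smul, smul_sub, RingHom.id_apply]

theorem mul_aeval_eq_aeval_mul_of_mul_eq {Z : Matrix m n R} {F : Matrix n n R}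
    {G : Matrix m m R} (hZ : Z * F = G * Z) (p : R[X]) :
    Z * aeval F p = aeval G p * Z := by
  have hpow (j : ℕ) : Z * F ^ j = G ^ j * Z := by
    induction j with
    | zero => simp
    | succ j ih =>
      rw [pow_succ, ← Matrix.mul_assoc, ih, Matrix.mul_assoc, hZ, ← Matrix.mul_assoc, ← pow_succ]
  induction p using Polynomial.induction_on' with
  | add p q hp hq => rw [map_add, map_add, Matrix.mul_add, Matrix.add_mul, hp, hq]
  | monomial j a =>
    rw [aeval_monomial, aeval_monomial, ← Algebra.smul_def, ← Algebra.smul_def,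
      Matrix.mul_smul, Matrix.smul_mul, hpow]

theorem eq_zero_of_mul_eq_of_isUnit_aeval_charpoly {Z : Matrix m n R} {F : Matrix n n R}
    {G : Matrix m m R} (hZ : Z * F = G * Z) (hunit : IsUnit (aeval G F.charpoly)) : Z = 0 := by
  have hkill : aeval G F.charpoly * Z = 0 := by
    rw [← mul_aeval_eq_aeval_mul_of_mul_eq hZ, aeval_self_charpoly, Matrix.mul_zero]
  obtain ⟨u, hu⟩ := hunit
  calc Z = (↑u⁻¹ * ↑u : Matrix m m R) * Z := by rw [Units.inv_mul, Matrix.one_mul]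
    _ = 0 := by rw [Matrix.mul_assoc, hu, hkill, Matrix.mul_zero]

end CommRing

section IsAlgClosed

variable [Field R] [IsAlgClosed R]

theorem isUnit_aeval_charpoly_of_disjoint_spectrum {F : Matrix n n R} {G : Matrix m m R}
    (h : Disjoint (spectrum R F) (spectrum R G)) : IsUnit (aeval G F.charpoly) := by
  rw [(IsAlgClosed.splits _).eq_prod_roots_of_monic F.charpoly_monic]
  by_contra hu
  obtain ⟨r, hrG, hrF⟩ := spectrum.exists_mem_of_not_isUnit_aeval_prod hu
  exact h.ne_of_mem (mem_spectrum_of_isRoot_charpoly hrF) hrG rfl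

theorem sylvesterMap_bijective_of_disjoint_spectrum {F : Matrix n n R} {G : Matrix m m R}
    (h : Disjoint (spectrum R F) (spectrum R G)) : Function.Bijective (sylvesterMap F G) := by
  have hinj : Function.Injective (sylvesterMap F G) :=
    (injective_iff_map_eq_zero _).2 fun _ hZ =>
      eq_zero_of_mul_eq_of_isUnit_aeval_charpoly (sub_eq_zero.1 hZ)
        (isUnit_aeval_charpoly_of_disjoint_spectrum h)
  exact ⟨hinj, LinearMap.injective_iff_surjective.1 hinj⟩

end IsAlgClosed

end Matrix

theorem stmt_15_general (k l : ℕ)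
    (F : Matrix (Fin l) (Fin l) ℂ) (G : Matrix (Fin k) (Fin k) ℂ)
    (h : spectrum ℂ F ∩ spectrum ℂ G = ∅) :
    Function.Bijective (fun Z : Matrix (Fin k) (Fin l) ℂ => Z * F - G * Z) :=
  Matrix.sylvesterMap_bijective_of_disjoint_spectrum (Set.disjoint_iff_inter_eq_empty.2 h)

/-- If the `l×l` complex matrix `F` and the `k×k` complex matrix `G` have disjoint spectra,
then `Z ↦ Z F - G Z` is a bijective endomorphism of the space of `k×l` complex matrices. -/
theorem stmt_15 (k l : ℕ) (hk : 0 < k) (hl : 0 < l)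
    (F : Matrix (Fin l) (Fin l) ℂ) (G : Matrix (Fin k) (Fin k) ℂ)
    (h : spectrum ℂ F ∩ spectrum ℂ G = ∅) :
    Function.Bijective (fun Z : Matrix (Fin k) (Fin l) ℂ => Z * F - G * Z) :=
  stmt_15_general k l F G h
end

section
/- Let λ be a real number with 0 < λ < 1. Let γ : ℕ × ℕ → ℂ be a doubly-indexed family of complex numbers and define δ : ℕ × ℕ → ℂ by δ(0,0) = 0, δ(p+1,0) = γ(p,0), δ(0,q+1) = −(q+λ)·γ(0,q), and δ(p+1,q+1) = γ(p,q+1) − (q+λ)·γ(p+1,q) for all p, q ≥ 0. If there exist C > 0 and R > 1 such that |δ(p,q)| ≤ C·R^{p+q}·q! for all p, q, then there exist Γ > 0 and S > 1 such that |γ(p,q)| ≤ Γ·S^{p+q}·q! for all p, q. -/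
/-!
Solving the recursion for `γ(p, q + 1)` expresses it through `δ(p + 1, q + 1)` and
`(q + λ) γ(p + 1, q)`, so induction on `q` (for all `p` at once) gives
`|γ(p, q)| ≤ C (q + 1) R^{p+q+1} q!`: the factor `q + λ ≤ q + 1` is absorbed by the passage
from `q!` to `(q + 1)!`. The polynomial factor `q + 1 ≤ 2^{p+q}` is then absorbed into `S = 2R`.
-/

open Nat

lemma norm_natCast_add_ofReal_le (q : ℕ) {t : ℝ} (h0 : 0 ≤ t) (h1 : t ≤ 1) :
    ‖(q : ℂ) + (t : ℂ)‖ ≤ q + 1 := by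
  have : (q : ℂ) + (t : ℂ) = ((q + t : ℝ) : ℂ) := by push_cast; ring
  rw [this, Complex.norm_real, Real.norm_of_nonneg (by positivity)]
  linarith

lemma le_mul_pow_mul_factorial_of_recursion {C R : ℝ} (u : ℕ × ℕ → ℝ)
    (hu0 : ∀ p, u (p, 0) ≤ C * R ^ (p + 1))
    (hu : ∀ p q, u (p, q + 1) ≤ C * R ^ (p + q + 2) * (q + 1)! + (q + 1) * u (p + 1, q))
    (p q : ℕ) : u (p, q) ≤ C * (q + 1) * R ^ (p + q + 1) * q ! := by
  induction q generalizing p with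
  | zero => simpa using hu0 p
  | succ q ih =>
    calc u (p, q + 1)
        ≤ C * R ^ (p + q + 2) * (q + 1)! + (q + 1) * (C * (q + 1) * R ^ (p + q + 2) * q !) := by
          have := ih (p + 1)
          rw [show p + 1 + q + 1 = p + q + 2 by ring] at this
          linarith [hu p q, mul_le_mul_of_nonneg_left this (by positivity : (0 : ℝ) ≤ q + 1)]
      _ = C * ((q + 1 : ℕ) + 1) * R ^ (p + (q + 1) + 1) * (q + 1)! := by
          rw [factorial_succ, show p + (q + 1) + 1 = p + q + 2 by ring]
          push_cast
          ring

lemma add_one_mul_pow_le_mul_two_mul_pow {R : ℝ} (hR : 0 ≤ R) (p q : ℕ) :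
    (q + 1) * R ^ (p + q + 1) ≤ R * (2 * R) ^ (p + q) := by
  have hq : (q + 1 : ℝ) ≤ 2 ^ (p + q) := by
    exact_mod_cast (Nat.lt_two_pow_self (n := q)).trans_le (pow_le_pow_right₀ one_le_two (by omega))
  calc (q + 1) * R ^ (p + q + 1) ≤ 2 ^ (p + q) * R ^ (p + q + 1) := by gcongr
    _ = R * (2 * R) ^ (p + q) := by rw [mul_pow, pow_succ]; ring

theorem stmt_18_general (lam : ℝ) (h0 : 0 < lam) (h1 : lam < 1)
    (γ δ : ℕ × ℕ → ℂ)
    (hδp0 : ∀ p : ℕ, δ (p + 1, 0) = γ (p, 0))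
    (hδ : ∀ p q : ℕ,
      δ (p + 1, q + 1) = γ (p, q + 1) - ((q : ℂ) + (lam : ℂ)) * γ (p + 1, q))
    (h : ∃ C : ℝ, 0 < C ∧ ∃ R : ℝ, 1 < R ∧
      ∀ p q : ℕ, ‖δ (p, q)‖ ≤ C * R ^ (p + q) * q.factorial) :
    ∃ Γ : ℝ, 0 < Γ ∧ ∃ S : ℝ, 1 < S ∧
      ∀ p q : ℕ, ‖γ (p, q)‖ ≤ Γ * S ^ (p + q) * q.factorial := by
  obtain ⟨C, hC, R, hR, hbd⟩ := h
  have hγ : ∀ p q, ‖γ (p, q)‖ ≤ C * (q + 1) * R ^ (p + q + 1) * q ! := by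
    refine le_mul_pow_mul_factorial_of_recursion (fun pq ↦ ‖γ pq‖) (fun p ↦ ?_) (fun p q ↦ ?_)
    · simpa [hδp0] using hbd (p + 1) 0
    · have hsolve : γ (p, q + 1) = δ (p + 1, q + 1) + ((q : ℂ) + lam) * γ (p + 1, q) := by
        rw [hδ]; ring
      have hδpq := hbd (p + 1) (q + 1)
      rw [show p + 1 + (q + 1) = p + q + 2 by ring] at hδpq
      calc ‖γ (p, q + 1)‖ ≤ ‖δ (p + 1, q + 1)‖ + ‖(q : ℂ) + lam‖ * ‖γ (p + 1, q)‖ := by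
            rw [hsolve, ← norm_mul]; exact norm_add_le _ _
        _ ≤ _ := by
            gcongr
            exact norm_natCast_add_ofReal_le q h0.le h1.le
  refine ⟨C * R, by positivity, 2 * R, by linarith, fun p q ↦ (hγ p q).trans ?_⟩
  have := add_one_mul_pow_le_mul_two_mul_pow (by linarith : 0 ≤ R) p q
  calc C * (q + 1) * R ^ (p + q + 1) * q ! = C * q ! * ((q + 1) * R ^ (p + q + 1)) := by ring
    _ ≤ C * q ! * (R * (2 * R) ^ (p + q)) := by gcongr
    _ = C * R * (2 * R) ^ (p + q) * q ! := by ring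

/-- Coefficient form of the right division by `(a - λ b)`, `0 < λ < 1`: if the coefficients
`δ` obtained from `γ` by the stated recursion satisfy `|δ(p,q)| ≤ C R^{p+q} q!` for some
`C > 0`, `R > 1`, then `γ` satisfies a bound of the same type. -/
theorem stmt_18 (lam : ℝ) (h0 : 0 < lam) (h1 : lam < 1)
    (γ δ : ℕ × ℕ → ℂ)
    (hδ00 : δ (0, 0) = 0)
    (hδp0 : ∀ p : ℕ, δ (p + 1, 0) = γ (p, 0))
    (hδ0q : ∀ q : ℕ, δ (0, q + 1) = -((q : ℂ) + (lam : ℂ)) * γ (0, q))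
    (hδ : ∀ p q : ℕ,
      δ (p + 1, q + 1) = γ (p, q + 1) - ((q : ℂ) + (lam : ℂ)) * γ (p + 1, q))
    (h : ∃ C : ℝ, 0 < C ∧ ∃ R : ℝ, 1 < R ∧
      ∀ p q : ℕ, ‖δ (p, q)‖ ≤ C * R ^ (p + q) * q.factorial) :
    ∃ Γ : ℝ, 0 < Γ ∧ ∃ S : ℝ, 1 < S ∧
      ∀ p q : ℕ, ‖γ (p, q)‖ ≤ Γ * S ^ (p + q) * q.factorial :=
  stmt_18_general lam h0 h1 γ δ hδp0 hδ h
end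

section
/- Let k, l be positive natural numbers and R > 1, C > 0 real numbers. Let F : ℕ → (k×k complex matrices), G : ℕ → (l×l complex matrices) and X : ℕ → (l×k complex matrices) be sequences with ‖F_j‖ ≤ C·R^j·j!, ‖G_j‖ ≤ C·R^j·j! and ‖X_j‖ ≤ C·R^j·j! for all j, where ‖·‖ denotes the L∞ operator norm on matrices (maximum absolute row sum), which is submultiplicative for matrix products. Let Z : ℕ → (l×k complex matrices) satisfy Z_0 = 0 and, for every j ≥ 1, Z_j·F_0 − G_0·Z_j + j·Z_j = −X_{j−1} + ∑_{p=1}^{j} (G_p·Z_{j−p} − Z_{j−p}·F_p). Then there exists D > 0 such that ‖Z_j‖ ≤ D·R^j·j! for all j. -/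
/-!
For large `j` the left-hand side of the recursion dominates: it has norm at least
`(j - ‖F₀‖ - ‖G₀‖) ‖Z_j‖`, while by induction the right-hand side is `O(D R^j j!)` with a
constant independent of `D`, because `∑_{p=1}^{j} p! (j-p)! ≤ 2 j!`. Taking `D` large enough to
cover the finitely many small `j` closes the induction.
-/

attribute [local instance] Matrix.linftyOpNormedAddCommGroup
attribute [local instance] Matrix.linftyOpNormedSpace

open Finset
open scoped Nat

namespace Nat

theorem factorial_mul_factorial_succ_le_factorial_add {p : ℕ} (hp : 1 ≤ p) (r : ℕ) :
    p ! * (r + 1)! ≤ (p + r)! := by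
  have hchoose : r + 1 ≤ (p + r).choose r :=
    calc r + 1 = (r + 1).choose r := (choose_succ_self_right r).symm
      _ ≤ (p + r).choose r := choose_le_choose r (by omega)
  calc p ! * (r + 1)! = (r + 1) * p ! * r ! := by rw [factorial_succ]; ring
    _ ≤ (p + r).choose r * p ! * r ! := by gcongr
    _ = (p + r)! := add_choose_mul_factorial_mul_factorial p r

theorem sum_Icc_factorial_mul_factorial_sub_le (j : ℕ) :
    ∑ p ∈ Icc 1 j, p ! * (j - p)! ≤ 2 * j ! := by
  rcases j with _ | n
  · simp
  have hterm : ∀ p ∈ Icc 1 n, p ! * (n + 1 - p)! ≤ n ! := by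
    intro p hp
    obtain ⟨hp1, hpn⟩ := mem_Icc.mp hp
    obtain ⟨r, rfl⟩ := exists_add_of_le hpn
    rw [show p + r + 1 - p = r + 1 by omega]
    exact factorial_mul_factorial_succ_le_factorial_add hp1 r
  calc ∑ p ∈ Icc 1 (n + 1), p ! * (n + 1 - p)!
      = ∑ p ∈ Icc 1 n, p ! * (n + 1 - p)! + (n + 1)! := by
        rw [sum_Icc_succ_top (by omega)]; simp
    _ ≤ n * n ! + (n + 1)! := by
        gcongr
        simpa using sum_le_card_nsmul _ _ _ hterm
    _ ≤ 2 * (n + 1)! := by rw [factorial_succ]; nlinarith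

end Nat

theorem pow_mul_factorial_monotone {R : ℝ} (hR : 1 ≤ R) : Monotone fun j : ℕ => R ^ j * j ! :=
  fun _ _ hij => by dsimp only; gcongr

namespace Matrix

variable {m n 𝕜 : Type*} [Fintype m] [Fintype n] [RCLike 𝕜]

theorem natCast_mul_norm_le_of_sylvester_eq {A B : Matrix m n 𝕜} {P : Matrix n n 𝕜}
    {Q : Matrix m m 𝕜} {j : ℕ} (h : A * P - Q * A + j • A = B) :
    j * ‖A‖ ≤ ‖B‖ + (‖P‖ + ‖Q‖) * ‖A‖ := by
  have hA : j • A = B - (A * P - Q * A) := by rw [← h]; abel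
  calc (j : ℝ) * ‖A‖ = ‖j • A‖ := by rw [RCLike.norm_nsmul 𝕜, nsmul_eq_mul]
    _ ≤ ‖B‖ + (‖A * P‖ + ‖Q * A‖) := by
        rw [hA]; exact (norm_sub_le _ _).trans (by gcongr; exact norm_sub_le _ _)
    _ ≤ ‖B‖ + (‖A‖ * ‖P‖ + ‖Q‖ * ‖A‖) := by
        gcongr <;> exact linfty_opNorm_mul _ _
    _ = ‖B‖ + (‖P‖ + ‖Q‖) * ‖A‖ := by ring

theorem norm_sum_Icc_mul_sub_mul_le {R C D : ℝ} (hR : 0 ≤ R) (hC : 0 ≤ C) (hD : 0 ≤ D)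
    {F : ℕ → Matrix n n 𝕜} {G : ℕ → Matrix m m 𝕜} {Z : ℕ → Matrix m n 𝕜} {j : ℕ}
    (hF : ∀ p, ‖F p‖ ≤ C * R ^ p * p !) (hG : ∀ p, ‖G p‖ ≤ C * R ^ p * p !)
    (hZ : ∀ q < j, ‖Z q‖ ≤ D * R ^ q * q !) :
    ‖∑ p ∈ Icc 1 j, (G p * Z (j - p) - Z (j - p) * F p)‖ ≤ 4 * C * D * R ^ j * j ! := by
  have hterm : ∀ p ∈ Icc 1 j, ‖G p * Z (j - p) - Z (j - p) * F p‖
      ≤ 2 * C * D * R ^ j * ((p ! * (j - p)! : ℕ) : ℝ) := by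
    intro p hp
    obtain ⟨hp1, hpj⟩ := mem_Icc.mp hp
    have hZp := hZ (j - p) (by omega)
    have hpow : R ^ p * R ^ (j - p) = R ^ j := by rw [← pow_add, Nat.add_sub_cancel' hpj]
    calc ‖G p * Z (j - p) - Z (j - p) * F p‖
        ≤ ‖G p‖ * ‖Z (j - p)‖ + ‖Z (j - p)‖ * ‖F p‖ :=
          (norm_sub_le _ _).trans (add_le_add (linfty_opNorm_mul _ _) (linfty_opNorm_mul _ _))
      _ ≤ (C * R ^ p * p !) * (D * R ^ (j - p) * (j - p)!)
            + (D * R ^ (j - p) * (j - p)!) * (C * R ^ p * p !) := by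
          gcongr
          exacts [hG p, hF p]
      _ = 2 * C * D * R ^ j * ((p ! * (j - p)! : ℕ) : ℝ) := by
          rw [← hpow]; push_cast; ring
  have hsum : (∑ p ∈ Icc 1 j, ((p ! * (j - p)! : ℕ) : ℝ)) ≤ 2 * j ! := by
    exact_mod_cast Nat.sum_Icc_factorial_mul_factorial_sub_le j
  calc ‖∑ p ∈ Icc 1 j, (G p * Z (j - p) - Z (j - p) * F p)‖
      ≤ ∑ p ∈ Icc 1 j, 2 * C * D * R ^ j * ((p ! * (j - p)! : ℕ) : ℝ) :=
        (norm_sum_le _ _).trans (sum_le_sum hterm)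
    _ = 2 * C * D * R ^ j * ∑ p ∈ Icc 1 j, ((p ! * (j - p)! : ℕ) : ℝ) := by rw [mul_sum]
    _ ≤ 2 * C * D * R ^ j * (2 * j !) := by gcongr
    _ = 4 * C * D * R ^ j * j ! := by ring

-- `j > 7C` makes `j - 2C` exceed `5C`, which beats `C + 4CD ≤ 5CD` once divided by `D ≥ 1`.
theorem norm_le_of_sylvester_rec {R C D : ℝ} (hR : 1 ≤ R) (hC : 0 ≤ C) (hD : 1 ≤ D)
    {F : ℕ → Matrix n n 𝕜} {G : ℕ → Matrix m m 𝕜} {X Z : ℕ → Matrix m n 𝕜} {j : ℕ}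
    (hF : ∀ p, ‖F p‖ ≤ C * R ^ p * p !) (hG : ∀ p, ‖G p‖ ≤ C * R ^ p * p !)
    (hX : ‖X (j - 1)‖ ≤ C * R ^ (j - 1) * (j - 1)!) (hj : 7 * C < j)
    (hrec : Z j * F 0 - G 0 * Z j + j • Z j
      = -X (j - 1) + ∑ p ∈ Icc 1 j, (G p * Z (j - p) - Z (j - p) * F p))
    (hZ : ∀ q < j, ‖Z q‖ ≤ D * R ^ q * q !) :
    ‖Z j‖ ≤ D * R ^ j * j ! := by
  set M := R ^ j * (j ! : ℝ)
  have hM : 1 ≤ M := by simpa using pow_mul_factorial_monotone hR (Nat.zero_le j)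
  have hXj : ‖X (j - 1)‖ ≤ C * M := hX.trans (by
    simpa only [mul_assoc] using
      mul_le_mul_of_nonneg_left (pow_mul_factorial_monotone hR (Nat.sub_le j 1)) hC)
  have hrhs := (norm_add_le _ _).trans (add_le_add (norm_neg (X (j - 1))).le
    (norm_sum_Icc_mul_sub_mul_le (by linarith) hC (by linarith) hF hG hZ))
  have hF0 : ‖F 0‖ ≤ C := by simpa using hF 0
  have hG0 : ‖G 0‖ ≤ C := by simpa using hG 0
  have hlhs : (j - 2 * C) * ‖Z j‖ ≤ C * M + 4 * C * D * M := by
    nlinarith [natCast_mul_norm_le_of_sylvester_eq hrec,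
      mul_le_mul_of_nonneg_right (add_le_add hF0 hG0) (norm_nonneg (Z j))]
  have hCM : C * M ≤ C * D * M := by
    nlinarith [mul_le_mul_of_nonneg_left hD (by positivity : 0 ≤ C * M)]
  have hgap : 0 ≤ (j - 7 * C) * (D * M) := by apply mul_nonneg <;> nlinarith
  rw [mul_assoc]
  exact le_of_mul_le_mul_left (by linarith : (j - 2 * C) * ‖Z j‖ ≤ (j - 2 * C) * (D * M))
    (by linarith)

end Matrix

theorem stmt_19_general (k l : ℕ) (R C : ℝ) (hR : 1 < R) (hC : 0 < C)
    (F : ℕ → Matrix (Fin k) (Fin k) ℂ) (G : ℕ → Matrix (Fin l) (Fin l) ℂ)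
    (X Z : ℕ → Matrix (Fin l) (Fin k) ℂ)
    (hF : ∀ j : ℕ, ‖F j‖ ≤ C * R ^ j * j.factorial)
    (hG : ∀ j : ℕ, ‖G j‖ ≤ C * R ^ j * j.factorial)
    (hX : ∀ j : ℕ, ‖X j‖ ≤ C * R ^ j * j.factorial)
    (hrec : ∀ j : ℕ, 1 ≤ j →
      Z j * F 0 - G 0 * Z j + j • Z j
        = -X (j - 1) + ∑ p ∈ Finset.Icc 1 j, (G p * Z (j - p) - Z (j - p) * F p)) :
    ∃ D : ℝ, 0 < D ∧ ∀ j : ℕ, ‖Z j‖ ≤ D * R ^ j * j.factorial := by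
  obtain ⟨N, hN⟩ := exists_nat_gt (7 * C)
  set D := 1 + ∑ i ∈ range N, ‖Z i‖
  have hD : 1 ≤ D := le_add_of_nonneg_right (sum_nonneg fun i _ => norm_nonneg (Z i))
  refine ⟨D, by linarith, fun j => ?_⟩
  induction j using Nat.strong_induction_on with | _ j ih
  rcases lt_or_ge j N with hjN | hNj
  · have hZj : ‖Z j‖ ≤ D := le_add_of_nonneg_of_le zero_le_one
      (single_le_sum (fun i _ => norm_nonneg (Z i)) (mem_range.mpr hjN))
    have hM : 1 ≤ R ^ j * j ! := by simpa using pow_mul_factorial_monotone hR.le (Nat.zero_le j)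
    rw [mul_assoc]
    exact hZj.trans (le_mul_of_one_le_right (by linarith) hM)
  · have hj : 7 * C < j := hN.trans_le (by exact_mod_cast hNj)
    have hj1 : 1 ≤ j := by exact_mod_cast (by linarith : (0 : ℝ) < j)
    exact Matrix.norm_le_of_sylvester_rec hR.le hC.le hD hF hG (hX (j - 1)) hj (hrec j hj1) ih

/-- Gevrey bounds for the solution of the recursive system (S): if
`‖F_j‖, ‖G_j‖, ‖X_j‖ ≤ C R^j j!` (L∞ operator norm) and `Z` satisfies `Z_0 = 0` and
`Z_j F_0 - G_0 Z_j + j Z_j = -X_{j-1} + ∑_{p=1}^{j} (G_p Z_{j-p} - Z_{j-p} F_p)` for `j ≥ 1`,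
then `‖Z_j‖ ≤ D R^j j!` for some `D > 0`. -/
theorem stmt_19 (k l : ℕ) (hk : 0 < k) (hl : 0 < l) (R C : ℝ) (hR : 1 < R) (hC : 0 < C)
    (F : ℕ → Matrix (Fin k) (Fin k) ℂ) (G : ℕ → Matrix (Fin l) (Fin l) ℂ)
    (X Z : ℕ → Matrix (Fin l) (Fin k) ℂ)
    (hF : ∀ j : ℕ, ‖F j‖ ≤ C * R ^ j * j.factorial)
    (hG : ∀ j : ℕ, ‖G j‖ ≤ C * R ^ j * j.factorial)
    (hX : ∀ j : ℕ, ‖X j‖ ≤ C * R ^ j * j.factorial)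
    (hZ0 : Z 0 = 0)
    (hrec : ∀ j : ℕ, 1 ≤ j →
      Z j * F 0 - G 0 * Z j + j • Z j
        = -X (j - 1) + ∑ p ∈ Finset.Icc 1 j, (G p * Z (j - p) - Z (j - p) * F p)) :
    ∃ D : ℝ, 0 < D ∧ ∀ j : ℕ, ‖Z j‖ ≤ D * R ^ j * j.factorial :=
  stmt_19_general k l R C hR hC F G X Z hF hG hX hrec
end
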